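/- Let Φ be a reduced irreducible crystallographic root system with highest root φ and fundamental coweights ω_i. Then the inversion set of the reflection s_φ equals the set of positive roots α such that ⟨α, ω_i⟩ > 0 for some simple root α_i with ⟨α_i, φ∨⟩ ≠ 0; equivalently, Φ(s_φ) = {α ∈ Φ⁺ : ⟨α, φ∨⟩ > 0}. -/
import Mathlib


open scoped RealInnerProductSpace Pointwise

namespace Paper

variable {V : Type*} [NormedAddCommGroup V] [InnerProductSpace ℝ V]

/-- The orthogonal reflection in the hyperplane perpendicular to `α`
(by convention the identity if `α = 0`). -/
noncomputable def sref (α : V) : V ≃ₗ[ℝ] V :=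
  letI := Classical.propDecidable (α = 0)
  if h : α = 0 then LinearEquiv.refl ℝ V
  else
    Module.reflection (x := α) (f := (2 / ⟪α, α⟫) • (innerₛₗ ℝ α)) <| by
      have h' : ⟪α, α⟫ ≠ 0 := inner_self_ne_zero.mpr h
      have h2 : ((2 / ⟪α, α⟫) • (innerₛₗ ℝ α)) α = (2 / ⟪α, α⟫) * ⟪α, α⟫ := by
        simp
      rw [h2, div_mul_cancel₀ _ h']

/-- `Φ` is a (finite, reduced, crystallographic) root system in the real inner
product space `V`. -/
structure IsRootSystem (Φ : Set V) : Prop where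
  finite : Φ.Finite
  nonzero : (0 : V) ∉ Φ
  span_top : Submodule.span ℝ Φ = ⊤
  neg_mem : ∀ α ∈ Φ, -α ∈ Φ
  refl_mem : ∀ α ∈ Φ, ∀ β ∈ Φ, sref α β ∈ Φ
  crystallographic : ∀ α ∈ Φ, ∀ β ∈ Φ, ∃ m : ℤ, 2 * ⟪α, β⟫ / ⟪β, β⟫ = (m : ℝ)
  reduced : ∀ α ∈ Φ, ∀ t : ℝ, t • α ∈ Φ → t = 1 ∨ t = -1

/-- Irreducibility of a root system. -/
def IsIrreducible (Φ : Set V) : Prop :=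
  ∀ Φ₁ Φ₂ : Set V, Φ = Φ₁ ∪ Φ₂ → (∀ α ∈ Φ₁, ∀ β ∈ Φ₂, ⟪α, β⟫ = 0) →
    Φ₁ = ∅ ∨ Φ₂ = ∅

/-- `αs` is a system of simple roots for `Φ`, with corresponding set `Pos` of
positive roots. -/
structure IsBase {n : ℕ} (Φ : Set V) (αs : Fin n → V) (Pos : Set V) : Prop where
  mem : ∀ i, αs i ∈ Φ
  indep : LinearIndependent ℝ αs
  span_eq : Submodule.span ℝ (Set.range αs) = ⊤
  pos_subset : Pos ⊆ Φ
  mem_pos_iff : ∀ β ∈ Φ, (β ∈ Pos ↔ ∃ c : Fin n → ℕ, β = ∑ i, (c i : ℝ) • αs i)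
  pos_or_neg : ∀ β ∈ Φ, β ∈ Pos ∨ -β ∈ Pos

/-- The Weyl group of `Φ`: the subgroup of `GL(V)` generated by the reflections
in the roots. -/
noncomputable def weylGroup (Φ : Set V) : Subgroup (V ≃ₗ[ℝ] V) :=
  Subgroup.closure (sref '' Φ)

/-- The standard parabolic subgroup generated by the simple reflections `sref (αs i)`
for `i ∈ J`. -/
noncomputable def parab {n : ℕ} (αs : Fin n → V) (J : Set (Fin n)) :
    Subgroup (V ≃ₗ[ℝ] V) :=
  Subgroup.closure ((fun i => sref (αs i)) '' J)

/-- The inversion set `Φ(w) = {β ∈ Φ⁺ : w⁻¹ β ∈ −Φ⁺}`. -/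
def invSet (Pos : Set V) (w : V ≃ₗ[ℝ] V) : Set V :=
  {β ∈ Pos | -(w⁻¹ β) ∈ Pos}

/-- The length of a Weyl group element, as the number of inversions. -/
noncomputable def len (Pos : Set V) (w : V ≃ₗ[ℝ] V) : ℕ :=
  (invSet Pos w).ncard

/-- `φ` is the highest root of the positive system `Pos` with simple roots `αs`. -/
def IsHighestRoot {n : ℕ} (αs : Fin n → V) (Pos : Set V) (φ : V) : Prop :=
  φ ∈ Pos ∧ ∀ β ∈ Pos, ∃ c : Fin n → ℕ, φ - β = ∑ i, (c i : ℝ) • αs i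

/-- Adjacency in the Bourbaki-labelled Dynkin diagram of the `E`-series (nodes `1,…,8`). -/
def eAdj (i j : ℕ) : Prop :=
  (i, j) ∈ ([(1,3),(3,1),(3,4),(4,3),(4,5),(5,4),(5,6),(6,5),(6,7),(7,6),(7,8),(8,7),(2,4),(4,2)] :
    List (ℕ × ℕ))

instance (i j : ℕ) : Decidable (eAdj i j) := by unfold eAdj; infer_instance

/-- Cartan integers of the `E`-series (Bourbaki labelling, nodes `1,…,8`):
`E₆`, `E₇` and `E₈` are obtained by restricting to nodes `1,…,n`. -/
def cartanE (i j : ℕ) : ℝ :=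
  if i = j then 2 else if eAdj i j then -1 else 0

/-- Cartan integers of `F₄` (Bourbaki labelling, nodes `1,…,4`; `α₁, α₂` long,
`α₃, α₄` short), with the convention `C i j = 2(αᵢ,αⱼ)/(αⱼ,αⱼ)`. -/
def cartanF (i j : ℕ) : ℝ :=
  if i = j then 2 else
  if (i, j) ∈ ([(1,2),(2,1),(3,2),(3,4),(4,3)] : List (ℕ × ℕ)) then -1 else
  if (i, j) = (2,3) then -2 else 0

/-- Cartan integers of `Aₙ` (nodes `1,…,n`). -/
def cartanA (i j : ℕ) : ℝ :=
  if i = j then 2 else if i + 1 = j ∨ j + 1 = i then -1 else 0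

/-- The simple roots `αs` realise the Cartan matrix `C` (indexed by nodes `1,…,n`). -/
def CartanIs {n : ℕ} (αs : Fin n → V) (C : ℕ → ℕ → ℝ) : Prop :=
  ∀ i j : Fin n, 2 * ⟪αs i, αs j⟫ / ⟪αs j, αs j⟫ = C ((i : ℕ) + 1) ((j : ℕ) + 1)


lemma sref_apply {α : V} (h : α ≠ 0) (β : V) :
    sref α β = β - (2 * ⟪α, β⟫ / ⟪α, α⟫) • α := by
  rw [sref, dif_neg h, Module.reflection_apply]
  congr 1
  simp [mul_comm, mul_div_assoc, div_mul_eq_mul_div]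

lemma sref_inv (α : V) : (sref α)⁻¹ = sref α := by
  rw [sref]
  split
  · rfl
  · exact Module.reflection_symm _

theorem statement1 {n : ℕ} (Φ : Set V) (hΦ : IsRootSystem Φ) (hirr : IsIrreducible Φ)
    (αs : Fin n → V) (Pos : Set V) (hbase : IsBase Φ αs Pos)
    (ω : Fin n → V) (hω : ∀ i j, ⟪ω i, αs j⟫ = if i = j then 1 else 0)
    (φ : V) (hφ : IsHighestRoot αs Pos φ) :
    invSet Pos (sref φ) =
        {β ∈ Pos | ∃ i, 2 * ⟪αs i, φ⟫ / ⟪φ, φ⟫ ≠ 0 ∧ 0 < ⟪β, ω i⟫} ∧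
      invSet Pos (sref φ) = {β ∈ Pos | 0 < 2 * ⟪β, φ⟫ / ⟪φ, φ⟫} := by
  obtain ⟨hφPos, hhigh⟩ := hφ
  have hφΦ : φ ∈ Φ := hbase.pos_subset hφPos
  have hφ0 : φ ≠ 0 := fun h => hΦ.nonzero (h ▸ hφΦ)
  have hD : (0:ℝ) < ⟪φ, φ⟫ :=
    lt_of_le_of_ne real_inner_self_nonneg (Ne.symm (inner_self_ne_zero.mpr hφ0))
  -- coefficient extraction
  have coeff : ∀ (c : Fin n → ℝ) (j : Fin n), ⟪ω j, ∑ i, c i • αs i⟫ = c j := by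
    intro c j
    rw [inner_sum]
    simp [real_inner_smul_right, hω, Finset.sum_ite_eq]
  obtain ⟨p, hp⟩ := (hbase.mem_pos_iff φ hφΦ).1 hφPos
  -- disjointness of Pos and -Pos
  have disj : ∀ β ∈ Pos, -β ∉ Pos := by
    intro β hβ hnβ
    obtain ⟨b, hb⟩ := (hbase.mem_pos_iff β (hbase.pos_subset hβ)).1 hβ
    obtain ⟨d, hd⟩ := (hbase.mem_pos_iff _ (hbase.pos_subset hnβ)).1 hnβ
    have hβ0 : β ≠ 0 := fun h => hΦ.nonzero (h ▸ hbase.pos_subset hβ)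
    apply hβ0
    have hz : ∀ j, (b j : ℝ) = 0 := by
      intro j
      have h1 : ⟪ω j, β⟫ = b j := by rw [hb]; exact coeff _ j
      have h2 : ⟪ω j, -β⟫ = d j := by rw [hd]; exact coeff _ j
      rw [inner_neg_right, h1] at h2
      have hb0 : (0:ℝ) ≤ b j := Nat.cast_nonneg _
      have hd0 : (0:ℝ) ≤ d j := Nat.cast_nonneg _
      linarith
    rw [hb]
    simp only [hz, zero_smul, Finset.sum_const_zero]
  -- key characterization of the inversion set
  have key : ∀ β ∈ Pos, (β ∈ invSet Pos (sref φ) ↔ 0 < 2 * ⟪β, φ⟫ / ⟪φ, φ⟫) := by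
    intro β hβ
    have hβΦ : β ∈ Φ := hbase.pos_subset hβ
    obtain ⟨m, hm⟩ := hΦ.crystallographic β hβΦ φ hφΦ
    have hsβ : sref φ β = β - (m : ℝ) • φ := by
      rw [sref_apply hφ0, real_inner_comm β φ, hm]
    have hmpos : (0 < 2 * ⟪β, φ⟫ / ⟪φ, φ⟫) ↔ 0 < m := by
      rw [hm]; exact_mod_cast Iff.rfl
    have hmem : β ∈ invSet Pos (sref φ) ↔ (β ∈ Pos ∧ -(sref φ β) ∈ Pos) := by
      rw [invSet, Set.mem_setOf_eq, sref_inv]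
    by_cases hm1 : 0 < m
    · -- β is an inversion
      set k := (m - 1).toNat with hkdef
      have hk : (k : ℝ) = (m : ℝ) - 1 := by
        have : ((m - 1).toNat : ℤ) = m - 1 := Int.toNat_of_nonneg (by omega)
        rw [hkdef]
        exact_mod_cast this
      obtain ⟨c, hc⟩ := hhigh β hβ
      have hval : (∑ i, ((k * p i + c i : ℕ) : ℝ) • αs i) = (k : ℝ) • φ + (φ - β) := by
        rw [hc, hp, Finset.smul_sum, ← Finset.sum_add_distrib]
        refine Finset.sum_congr rfl fun i _ => ?_
        push_cast
        rw [add_smul, smul_smul]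
      have heq : -(sref φ β) = ∑ i, ((k * p i + c i : ℕ) : ℝ) • αs i := by
        rw [hval, hsβ, hk]
        module
      have h1 : sref φ β ∈ Φ := hΦ.refl_mem φ hφΦ β hβΦ
      have h2 : -(sref φ β) ∈ Φ := hΦ.neg_mem _ h1
      have h3 : -(sref φ β) ∈ Pos := (hbase.mem_pos_iff _ h2).2 ⟨_, heq⟩
      exact ⟨fun _ => hmpos.mpr hm1, fun _ => hmem.mpr ⟨hβ, h3⟩⟩
    · -- β is not an inversion
      push_neg at hm1
      set k := (-m).toNat with hkdef
      have hk : (k : ℝ) = -(m : ℝ) := by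
        have : ((-m).toNat : ℤ) = -m := Int.toNat_of_nonneg (by omega)
        rw [hkdef]
        exact_mod_cast this
      obtain ⟨b, hb⟩ := (hbase.mem_pos_iff β hβΦ).1 hβ
      have hval : (∑ i, ((b i + k * p i : ℕ) : ℝ) • αs i) = β + (k : ℝ) • φ := by
        rw [hb, hp, Finset.smul_sum, ← Finset.sum_add_distrib]
        refine Finset.sum_congr rfl fun i _ => ?_
        push_cast
        rw [add_smul, smul_smul]
      have heq : sref φ β = ∑ i, ((b i + k * p i : ℕ) : ℝ) • αs i := by
        rw [hval, hsβ, hk]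
        module
      have h1 : sref φ β ∈ Φ := hΦ.refl_mem φ hφΦ β hβΦ
      have h3 : sref φ β ∈ Pos := (hbase.mem_pos_iff _ h1).2 ⟨_, heq⟩
      constructor
      · intro hin
        exact absurd ((hmem.mp hin).2) (disj _ h3)
      · intro h
        exact absurd (hmpos.mp h) (by omega)
  -- dominance of the highest root
  have dom : ∀ j, 0 ≤ ⟪αs j, φ⟫ := by
    intro j
    by_contra hneg
    push_neg at hneg
    obtain ⟨m, hm⟩ := hΦ.crystallographic (αs j) (hbase.mem j) φ hφΦ
    have hmneg : m < 0 := by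
      have h1 : 2 * ⟪αs j, φ⟫ / ⟪φ, φ⟫ < 0 := div_neg_of_neg_of_pos (by linarith) hD
      rw [hm] at h1
      exact_mod_cast h1
    set k := (-m).toNat with hkdef
    have hk : (k : ℝ) = -(m : ℝ) := by
      have : ((-m).toNat : ℤ) = -m := Int.toNat_of_nonneg (by omega)
      rw [hkdef]
      exact_mod_cast this
    have hk1 : (1:ℝ) ≤ (k : ℝ) := by
      rw [hk]
      have : (m : ℝ) ≤ -1 := by exact_mod_cast (by omega : m ≤ -1)
      linarith
    have hαjPos : αs j ∈ Pos := by
      refine (hbase.mem_pos_iff _ (hbase.mem j)).2 ⟨fun i => if i = j then 1 else 0, ?_⟩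
      rw [show (∑ i, ((if i = j then 1 else 0 : ℕ) : ℝ) • αs i)
            = ∑ i, (if i = j then αs i else 0) from
          Finset.sum_congr rfl fun i _ => by split <;> simp]
      simp
    have hs : sref φ (αs j) = αs j + (k : ℝ) • φ := by
      rw [sref_apply hφ0, real_inner_comm (αs j) φ, hm, hk]
      module
    have hval : (∑ i, (((if i = j then 1 else 0) + k * p i : ℕ) : ℝ) • αs i)
        = αs j + (k : ℝ) • φ := by
      rw [hp, Finset.smul_sum]
      rw [show (∑ i, (((if i = j then 1 else 0) + k * p i : ℕ) : ℝ) • αs i)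
            = ∑ i, ((if i = j then αs i else 0) + (k : ℝ) • ((p i : ℝ) • αs i)) from
          Finset.sum_congr rfl fun i _ => by push_cast; rw [add_smul, smul_smul]; split <;> simp]
      rw [Finset.sum_add_distrib]
      simp
    have h1 : sref φ (αs j) ∈ Φ := hΦ.refl_mem φ hφΦ _ (hbase.mem j)
    have h3 : sref φ (αs j) ∈ Pos := (hbase.mem_pos_iff _ h1).2 ⟨_, by rw [hs, ← hval]⟩
    obtain ⟨c, hc⟩ := hhigh _ h3
    have hcj : ⟪ω j, φ - sref φ (αs j)⟫ = c j := by rw [hc]; exact coeff _ j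
    have hpω : ⟪ω j, φ⟫ = p j := by rw [hp]; exact coeff _ j
    have hcomp : ⟪ω j, φ - sref φ (αs j)⟫ = (1 - (k:ℝ)) * (p j) - 1 := by
      rw [hs, inner_sub_right, inner_add_right, real_inner_smul_right, hpω, hω]
      simp
      ring
    have hc0 : (0:ℝ) ≤ c j := Nat.cast_nonneg _
    have hp0 : (0:ℝ) ≤ p j := Nat.cast_nonneg _
    rw [hcomp] at hcj
    nlinarith
  -- comparison of the two descriptions
  have descr : ∀ β ∈ Pos,
      ((∃ i, 2 * ⟪αs i, φ⟫ / ⟪φ, φ⟫ ≠ 0 ∧ 0 < ⟪β, ω i⟫) ↔ 0 < 2 * ⟪β, φ⟫ / ⟪φ, φ⟫) := by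
    intro β hβ
    obtain ⟨b, hb⟩ := (hbase.mem_pos_iff β (hbase.pos_subset hβ)).1 hβ
    have hβφ : ⟪β, φ⟫ = ∑ i, (b i : ℝ) * ⟪αs i, φ⟫ := by
      rw [hb, sum_inner]
      exact Finset.sum_congr rfl fun i _ => real_inner_smul_left _ _ _
    have hbω : ∀ i, ⟪β, ω i⟫ = b i := by
      intro i
      rw [real_inner_comm, hb]
      exact coeff _ i
    constructor
    · rintro ⟨i, hi1, hi2⟩
      have hαpos : 0 < ⟪αs i, φ⟫ := lt_of_le_of_ne (dom i) (by
        intro h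
        exact hi1 (by rw [← h]; ring))
      have hbi : (0:ℝ) < b i := by rw [← hbω i]; exact hi2
      have hsum : (b i : ℝ) * ⟪αs i, φ⟫ ≤ ⟪β, φ⟫ := by
        rw [hβφ]
        exact Finset.single_le_sum (f := fun i => (b i : ℝ) * ⟪αs i, φ⟫)
          (fun i _ => mul_nonneg (Nat.cast_nonneg _) (dom i)) (Finset.mem_univ i)
      have : 0 < ⟪β, φ⟫ := lt_of_lt_of_le (mul_pos hbi hαpos) hsum
      positivity
    · intro h
      have hβφpos : 0 < ⟪β, φ⟫ := by
        by_contra hle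
        push_neg at hle
        have : 2 * ⟪β, φ⟫ / ⟪φ, φ⟫ ≤ 0 := div_nonpos_of_nonpos_of_nonneg (by linarith) hD.le
        linarith
      rw [hβφ] at hβφpos
      obtain ⟨i, -, hi⟩ := Finset.exists_lt_of_sum_lt (f := fun _ => (0:ℝ))
        (g := fun i => (b i : ℝ) * ⟪αs i, φ⟫) (by simpa using hβφpos)
      have hbi : (0:ℝ) < b i := by
        rcases lt_or_eq_of_le (Nat.cast_nonneg (α := ℝ) (b i)) with h' | h'
        · exact h'
        · exfalso; rw [← h'] at hi; simp at hi
      have hαpos : 0 < ⟪αs i, φ⟫ := by nlinarith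
      refine ⟨i, ne_of_gt (by positivity), ?_⟩
      rw [hbω i]; exact hbi
  -- assemble
  have hsecond : invSet Pos (sref φ) = {β ∈ Pos | 0 < 2 * ⟪β, φ⟫ / ⟪φ, φ⟫} := by
    ext β
    constructor
    · intro h
      have hβ : β ∈ Pos := h.1
      exact ⟨hβ, (key β hβ).mp h⟩
    · intro h
      exact (key β h.1).mpr h.2
  refine ⟨?_, hsecond⟩
  rw [hsecond]
  ext β
  constructor
  · intro h
    exact ⟨h.1, (descr β h.1).mpr h.2⟩
  · intro h
    exact ⟨h.1, (descr β h.1).mp h.2⟩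


end Paper
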